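/- Every ω-language recognized by a deterministic reachability-regular Parikh automaton is recognized by a deterministic weak reset Parikh automaton; moreover the inclusion is strict since {aⁿbⁿ | n > 0}^ω is deterministic weak reset PA recognizable but not reachability-regular PA recognizable. -/

import Mathlib

/-! Common definitions: semi-linear sets, Parikh automata on finite and infinite words. -/

/-- The linear set with base vector `b` and finite set `P` of period vectors. -/
def LinSet {d : ℕ} {M : Type} [AddCommMonoid M] (b : Fin d → M)
    (P : Finset (Fin d → M)) : Set (Fin d → M) :=
  {v | ∃ z : (Fin d → M) → ℕ, v = b + ∑ p ∈ P, z p • p}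

/-- A set is semi-linear if it is a finite union of linear sets. -/
def SemiLin {d : ℕ} {M : Type} [AddCommMonoid M] (S : Set (Fin d → M)) : Prop :=
  ∃ (n : ℕ) (b : Fin n → Fin d → M) (P : Fin n → Finset (Fin d → M)),
    S = ⋃ i, LinSet (b i) (P i)

/-- The length-`n` prefix of an infinite word. -/
def pref {S : Type} (α : ℕ → S) (n : ℕ) : List S := List.ofFn fun i : Fin n => α i.1

/-- An infinite word is ultimately periodic if it has the form `u v^ω`. -/
def UltimatelyPeriodic {S : Type} (α : ℕ → S) : Prop :=
  ∃ n p, 0 < p ∧ ∀ i, n ≤ i → α (i + p) = α i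

/-- The finite infix `α[m+1 : n]` (0-indexed positions `m, …, n-1`). -/
def infixSeg {S : Type} (α : ℕ → S) (m n : ℕ) : List S :=
  List.ofFn fun j : Fin (n - m) => α (m + j.1)

/-- `W^ω`: infinite concatenations of non-empty words from `W`. -/
def omegaPow {S : Type} (W : Set (List S)) : Set (ℕ → S) :=
  {α | ∃ k : ℕ → ℕ, k 0 = 0 ∧ StrictMono k ∧ ∀ i, infixSeg α (k i) (k (i + 1)) ∈ W}

/-- A deterministic Parikh automaton with states `Q`, alphabet `S`, dimension `d`,
and a constraint set `C` of vectors over `M` (`M = ℕ`, or `M = ℕ∞` for limit PA). -/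
structure DetPA (Q S : Type) (d : ℕ) (M : Type) where
  init : Q
  trans : Q → S → (Fin d → ℕ) × Q
  acc : Q → Prop
  C : Set (Fin d → M)

namespace DetPA

variable {Q S M : Type} {d : ℕ}

/-- The run of `A` from state `p` on the infinite word `α`: state after `i` letters. -/
def run (A : DetPA Q S d M) (p : Q) (α : ℕ → S) : ℕ → Q
  | 0 => p
  | i + 1 => (A.trans (A.run p α i) (α i)).2

/-- The state of the unique run of `A` on `α` after `i` letters. -/
def stateAt (A : DetPA Q S d M) (α : ℕ → S) : ℕ → Q := A.run A.init α

/-- The vector of the `i`-th transition of the unique run of `A` on `α`. -/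
def step (A : DetPA Q S d M) (α : ℕ → S) (i : ℕ) : Fin d → ℕ :=
  (A.trans (A.stateAt α i) (α i)).1

/-- Sum of transition vectors of the run of `A` on `α` on positions `m, …, n-1`. -/
def vecSum (A : DetPA Q S d M) (α : ℕ → S) (m n : ℕ) : Fin d → ℕ :=
  ∑ i ∈ Finset.Ico m n, A.step α i

/-- The state reached when reading a finite word from state `p`. -/
def runList (A : DetPA Q S d M) : Q → List S → Q
  | p, [] => p
  | p, a :: w => A.runList (A.trans p a).2 w

/-- The sum of transition vectors collected when reading a finite word from state `p`. -/
def sumList (A : DetPA Q S d M) : Q → List S → (Fin d → ℕ)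
  | _, [] => 0
  | p, a :: w => (A.trans p a).1 + A.sumList (A.trans p a).2 w

/-- Finite-word acceptance: end in an accepting state with vector sum in `C`. -/
def AcceptsWord (A : DetPA Q S d ℕ) (w : List S) : Prop :=
  A.acc (A.runList A.init w) ∧ A.sumList A.init w ∈ A.C

/-- The run visits accepting states infinitely often. -/
def InfAcc (A : DetPA Q S d M) (α : ℕ → S) : Prop :=
  ∀ n, ∃ i, n ≤ i ∧ A.acc (A.stateAt α i)

/-- Reachability condition. -/
def ReachAccept (A : DetPA Q S d ℕ) (α : ℕ → S) : Prop :=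
  ∃ i, 1 ≤ i ∧ A.acc (A.stateAt α i) ∧ A.vecSum α 0 i ∈ A.C

/-- Reachability-regular condition. -/
def ReachRegAccept (A : DetPA Q S d ℕ) (α : ℕ → S) : Prop :=
  A.ReachAccept α ∧ A.InfAcc α

/-- Büchi condition. -/
def BuchiAccept (A : DetPA Q S d ℕ) (α : ℕ → S) : Prop :=
  ∀ n, ∃ i, n ≤ i ∧ 1 ≤ i ∧ A.acc (A.stateAt α i) ∧ A.vecSum α 0 i ∈ A.C

/-- Weak reset condition. -/
def WeakResetAccept (A : DetPA Q S d ℕ) (α : ℕ → S) : Prop :=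
  ∃ k : ℕ → ℕ, k 0 = 0 ∧ StrictMono k ∧
    (∀ i, A.acc (A.stateAt α (k (i + 1)))) ∧
    (∀ i, A.vecSum α (k i) (k (i + 1)) ∈ A.C)

/-- Strong reset condition: accepting states occur infinitely often, and between any
two consecutive accepting positions (and from position `0` to the first one) the
collected vector lies in `C`. -/
def StrongResetAccept (A : DetPA Q S d ℕ) (α : ℕ → S) : Prop :=
  (∀ n, ∃ i, n ≤ i ∧ 1 ≤ i ∧ A.acc (A.stateAt α i)) ∧
  ∀ m n, m < n → (m = 0 ∨ (1 ≤ m ∧ A.acc (A.stateAt α m))) →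
    A.acc (A.stateAt α n) →
    (∀ j, m < j → j < n → ¬ A.acc (A.stateAt α j)) →
    A.vecSum α m n ∈ A.C

/-- The extended Parikh image of the unique run of `A` on `α`: componentwise the
supremum in `ℕ∞` of the partial sums (`∞` iff the component is incremented
infinitely often, else the finite total sum). -/
noncomputable def limImage (A : DetPA Q S d M) (α : ℕ → S) : Fin d → ℕ∞ :=
  fun j => ⨆ n, (A.vecSum α 0 n j : ℕ∞)

/-- Limit condition. -/
def LimitAccept (A : DetPA Q S d ℕ∞) (α : ℕ → S) : Prop :=
  A.InfAcc α ∧ A.limImage α ∈ A.C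

end DetPA

/-- `U` is recognized by a deterministic finite-word Parikh automaton. -/
def DetPARecogFin {S : Type} (U : Set (List S)) : Prop :=
  ∃ (d : ℕ) (Q : Type) (_ : Finite Q) (A : DetPA Q S d ℕ),
    SemiLin A.C ∧ U = {w | A.AcceptsWord w}

/-- `L` is recognized by a deterministic reachability PA. -/
def DetReachRecog {S : Type} (L : Set (ℕ → S)) : Prop :=
  ∃ (d : ℕ) (Q : Type) (_ : Finite Q) (A : DetPA Q S d ℕ),
    SemiLin A.C ∧ L = {α | A.ReachAccept α}

/-- `L` is recognized by a deterministic reachability-regular PA. -/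
def DetReachRegRecog {S : Type} (L : Set (ℕ → S)) : Prop :=
  ∃ (d : ℕ) (Q : Type) (_ : Finite Q) (A : DetPA Q S d ℕ),
    SemiLin A.C ∧ L = {α | A.ReachRegAccept α}

/-- `L` is recognized by a deterministic Büchi PA. -/
def DetBuchiRecog {S : Type} (L : Set (ℕ → S)) : Prop :=
  ∃ (d : ℕ) (Q : Type) (_ : Finite Q) (A : DetPA Q S d ℕ),
    SemiLin A.C ∧ L = {α | A.BuchiAccept α}

/-- `L` is recognized by a deterministic weak reset PA. -/
def DetWeakResetRecog {S : Type} (L : Set (ℕ → S)) : Prop :=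
  ∃ (d : ℕ) (Q : Type) (_ : Finite Q) (A : DetPA Q S d ℕ),
    SemiLin A.C ∧ L = {α | A.WeakResetAccept α}

/-- `L` is recognized by a deterministic strong reset PA. -/
def DetStrongResetRecog {S : Type} (L : Set (ℕ → S)) : Prop :=
  ∃ (d : ℕ) (Q : Type) (_ : Finite Q) (A : DetPA Q S d ℕ),
    SemiLin A.C ∧ L = {α | A.StrongResetAccept α}

/-- `L` is recognized by a deterministic limit PA (constraint set over `ℕ∞`). -/
def DetLimitRecog {S : Type} (L : Set (ℕ → S)) : Prop :=
  ∃ (d : ℕ) (Q : Type) (_ : Finite Q) (A : DetPA Q S d ℕ∞),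
    SemiLin A.C ∧ L = {α | A.LimitAccept α}

/-- A nondeterministic Parikh automaton. -/
structure NPA (Q S : Type) (d : ℕ) where
  init : Q
  trans : Q → S → (Fin d → ℕ) → Q → Prop
  acc : Q → Prop
  C : Set (Fin d → ℕ)

namespace NPA

variable {Q S : Type} {d : ℕ}

/-- `r, v` form a run of `A` on the infinite word `α`. -/
def IsRun (A : NPA Q S d) (α : ℕ → S) (r : ℕ → Q) (v : ℕ → Fin d → ℕ) : Prop :=
  r 0 = A.init ∧ ∀ i, A.trans (r i) (α i) (v i) (r (i + 1))

/-- Partial sums of the vectors of a run over positions `m, …, n-1`. -/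
def partSum (v : ℕ → Fin d → ℕ) (m n : ℕ) : Fin d → ℕ := ∑ i ∈ Finset.Ico m n, v i

/-- Nondeterministic reachability-regular acceptance. -/
def ReachRegAccept (A : NPA Q S d) (α : ℕ → S) : Prop :=
  ∃ r v, A.IsRun α r v ∧ (∃ i, 1 ≤ i ∧ A.acc (r i) ∧ partSum v 0 i ∈ A.C) ∧
    ∀ n, ∃ i, n ≤ i ∧ A.acc (r i)

/-- Nondeterministic strong reset acceptance. -/
def StrongResetAccept (A : NPA Q S d) (α : ℕ → S) : Prop :=
  ∃ r v, A.IsRun α r v ∧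
    (∀ n, ∃ i, n ≤ i ∧ 1 ≤ i ∧ A.acc (r i)) ∧
    ∀ m n, m < n → (m = 0 ∨ (1 ≤ m ∧ A.acc (r m))) → A.acc (r n) →
      (∀ j, m < j → j < n → ¬ A.acc (r j)) → partSum v m n ∈ A.C

/-- Nondeterministic weak reset acceptance. -/
def WeakResetAccept (A : NPA Q S d) (α : ℕ → S) : Prop :=
  ∃ r v, A.IsRun α r v ∧ ∃ k : ℕ → ℕ, k 0 = 0 ∧ StrictMono k ∧
    (∀ i, A.acc (r (k (i + 1)))) ∧ (∀ i, partSum v (k i) (k (i + 1)) ∈ A.C)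

/-- Runs of a nondeterministic PA on a finite word, from state `p` to state `q`
collecting vector sum `v`. -/
def ListRun (A : NPA Q S d) : Q → List S → (Fin d → ℕ) → Q → Prop
  | p, [], v, q => q = p ∧ v = 0
  | p, a :: w, v, q => ∃ u p', A.trans p a u p' ∧ ∃ v', A.ListRun p' w v' q ∧ v = u + v'

/-- Finite-word acceptance for a nondeterministic PA. -/
def AcceptsWord (A : NPA Q S d) (w : List S) : Prop :=
  ∃ v q, A.ListRun A.init w v q ∧ A.acc q ∧ v ∈ A.C

end NPA

/-- `L` is recognized by a (nondeterministic) reachability-regular PA. -/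
def NPAReachRegRecog {S : Type} (L : Set (ℕ → S)) : Prop :=
  ∃ (d : ℕ) (Q : Type) (_ : Finite Q) (A : NPA Q S d),
    SemiLin A.C ∧ L = {α | A.ReachRegAccept α}

/-- `L` is recognized by a (nondeterministic) strong reset PA. -/
def NPAStrongResetRecog {S : Type} (L : Set (ℕ → S)) : Prop :=
  ∃ (d : ℕ) (Q : Type) (_ : Finite Q) (A : NPA Q S d),
    SemiLin A.C ∧ L = {α | A.StrongResetAccept α}

/-- `L` is recognized by a (nondeterministic) weak reset PA. -/
def NPAWeakResetRecog {S : Type} (L : Set (ℕ → S)) : Prop :=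
  ∃ (d : ℕ) (Q : Type) (_ : Finite Q) (A : NPA Q S d),
    SemiLin A.C ∧ L = {α | A.WeakResetAccept α}

/-- A nondeterministic Büchi automaton. -/
structure NBA (Q S : Type) where
  init : Q
  trans : Q → S → Q → Prop
  acc : Q → Prop

/-- Büchi acceptance. -/
def NBA.Accepts {Q S : Type} (B : NBA Q S) (α : ℕ → S) : Prop :=
  ∃ r : ℕ → Q, r 0 = B.init ∧ (∀ i, B.trans (r i) (α i) (r (i + 1))) ∧
    ∀ n, ∃ i, n ≤ i ∧ B.acc (r i)

/-- `L` is ω-regular: recognized by a nondeterministic Büchi automaton. -/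
def OmegaRegular {S : Type} (L : Set (ℕ → S)) : Prop :=
  ∃ (Q : Type) (_ : Finite Q) (B : NBA Q S), L = {α | B.Accepts α}

/-- The finite-word language `{aⁿbⁿ | n > 0}` over `{a,b} = Bool`
(`a := true`, `b := false`). -/
def Wanbn : Set (List Bool) :=
  {w | ∃ n, 0 < n ∧ w = List.replicate n true ++ List.replicate n false}


/-! A reachability-regular automaton is simulated by a weak reset automaton that starts in a fresh
copy of the initial state and has one extra counter, equal to `1` on the first transition and `0`
afterwards. The first reset segment must then satisfy the original constraint, while every later
segment, whose extra counter is `0`, is unconstrained; the later resets only witness infinitely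
many accepting positions.

`{aⁿbⁿ | n > 0}^ω` is recognized by resetting just after the first `a` of every block: counting
`a`s, `b`s and factors `ba` pins every segment down to one block, shifted by one letter.

It is not even nondeterministically reachability-regular. In `(aᵐbᵐ)^ω`, with `m` larger than the
number of states, some state repeats inside the first `a`-block after the reachability condition
is met. Repeating that loop keeps the word accepted, but creates a block `aᵐ⁺ᵟbᵐ`, so the pumped
word has no factorization into words `aⁿbⁿ`. -/

open Set Filter
open scoped Pointwise

section Semilinear

variable {d : ℕ} {M : Type} [AddCommMonoid M]

theorem linSet_eq_vadd_closure (b : Fin d → M) (P : Finset (Fin d → M)) :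
    LinSet b P = b +ᵥ (AddSubmonoid.closure (P : Set (Fin d → M)) : Set (Fin d → M)) := by
  classical
  ext v
  simp only [LinSet, mem_ofPred_eq, mem_vadd_set, SetLike.mem_coe,
    AddSubmonoid.mem_closure_finset, vadd_eq_add]
  constructor
  · rintro ⟨z, rfl⟩
    refine ⟨_, ⟨fun p => if p ∈ P then z p else 0, fun p hp => ?_, rfl⟩, ?_⟩
    · by_contra h
      exact hp (if_neg h)
    · congr 1
      exact Finset.sum_congr rfl fun p hp => by simp [hp]
  · rintro ⟨_, ⟨z, -, rfl⟩, rfl⟩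
    exact ⟨z, rfl⟩

theorem semiLin_iff_isSemilinearSet {S : Set (Fin d → M)} : SemiLin S ↔ IsSemilinearSet S := by
  constructor
  · rintro ⟨n, b, P, rfl⟩
    exact IsSemilinearSet.iUnion fun i =>
      (isLinearSet_iff.2 ⟨b i, P i, linSet_eq_vadd_closure _ _⟩).isSemilinearSet
  · rw [isSemilinearSet_iff]
    rintro ⟨T, hT, rfl⟩
    choose b P hbP using fun t : T => isLinearSet_iff.1 (hT t t.2)
    refine ⟨T.card, b ∘ T.equivFin.symm, P ∘ T.equivFin.symm, ?_⟩
    ext v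
    simp only [mem_sUnion, mem_iUnion, Function.comp_apply, linSet_eq_vadd_closure]
    constructor
    · rintro ⟨t, ht, hv⟩
      exact ⟨T.equivFin ⟨t, ht⟩, by simpa [← hbP] using hv⟩
    · rintro ⟨i, hv⟩
      exact ⟨_, (T.equivFin.symm i).2, by rwa [hbP]⟩

end Semilinear

section InfixSeg

variable {S : Type} (α : ℕ → S)

theorem infixSeg_eq_map_range' (m n : ℕ) : infixSeg α m n = (List.range' m (n - m)).map α := by
  apply List.ext_getElem <;> simp [infixSeg]

theorem infixSeg_self (m : ℕ) : infixSeg α m m = [] := by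
  simp [infixSeg]

theorem infixSeg_succ_right {m n : ℕ} (h : m ≤ n) :
    infixSeg α m (n + 1) = infixSeg α m n ++ [α n] := by
  rw [infixSeg_eq_map_range', infixSeg_eq_map_range', Nat.sub_add_comm h, List.range'_concat]
  simp [Nat.add_sub_cancel' h]

theorem infixSeg_eq_cons {m n : ℕ} (h : m < n) :
    infixSeg α m n = α m :: infixSeg α (m + 1) n := by
  rw [infixSeg_eq_map_range', infixSeg_eq_map_range', show n - m = n - (m + 1) + 1 by omega,
    List.range'_succ]
  rfl

end InfixSeg

theorem List.exists_eq_replicate_append {S : Type} (c : S) (w : List S) :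
    ∃ r w', w = List.replicate r c ++ w' ∧ w'.head? ≠ some c := by
  induction w with
  | nil => exact ⟨0, [], rfl, by simp⟩
  | cons x w ih =>
    by_cases hx : x = c
    · obtain ⟨r, w', rfl, hw'⟩ := ih
      exact ⟨r + 1, w', by simp [hx, List.replicate_succ], hw'⟩
    · exact ⟨0, x :: w, rfl, by simpa using hx⟩

/-- The factorization into words of `W` is shifted one letter to the right, so that each factor
ends with the first letter `c` of the next one. At `i = 0` the truncated subtraction
`k 0 - 1 = 0` makes the first factor start at position `0`. -/
theorem mem_omegaPow_iff_of_head {S : Type} {W : Set (List S)} {c : S}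
    (hW : ∀ w ∈ W, w.head? = some c) (α : ℕ → S) :
    α ∈ omegaPow W ↔ ∃ k : ℕ → ℕ, k 0 = 0 ∧ StrictMono k ∧
      ∀ i, infixSeg α (k i - 1) (k (i + 1)) ∈ (· ++ [c]) '' W := by
  constructor
  · rintro ⟨j, hj0, hj, hjW⟩
    have hstart : ∀ i, α (j i) = c := fun i => by
      simpa [infixSeg_eq_cons α (hj (Nat.lt_add_one i))] using hW _ (hjW i)
    refine ⟨fun i => j i + min i 1, by simp [hj0], strictMono_nat_of_lt_succ fun i => ?_,
      fun i => ⟨_, hjW i, ?_⟩⟩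
    · have := hj (Nat.lt_add_one i)
      omega
    · have hki : j i + min i 1 - 1 = j i := by rcases i with _ | i <;> simp [hj0]
      dsimp only
      rw [hki, Nat.min_eq_right (Nat.le_add_left 1 i),
        infixSeg_succ_right α (hj (Nat.lt_add_one i)).le, hstart]
  · rintro ⟨k, hk0, hk, hkW⟩
    have hlen : ∀ i, (k i - 1) + 2 ≤ k (i + 1) := by
      intro i
      obtain ⟨w, hw, hseg⟩ := hkW i
      have hne : w ≠ [] := fun h => by simpa [h] using hW w hw
      have := congrArg List.length hseg
      simp only [infixSeg, List.length_ofFn, List.length_append, List.length_singleton] at this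
      have := List.length_pos_of_ne_nil hne
      have := hk (Nat.lt_add_one i)
      omega
    refine ⟨fun i => k i - 1, by simp [hk0], strictMono_nat_of_lt_succ fun i => ?_, fun i => ?_⟩
    · have := hlen (i + 1)
      have := hlen i
      omega
    · obtain ⟨w, hw, hseg⟩ := hkW i
      have hsplit : infixSeg α (k i - 1) (k (i + 1)) =
          infixSeg α (k i - 1) (k (i + 1) - 1) ++ [α (k (i + 1) - 1)] := by
        have := hlen i
        rw [← infixSeg_succ_right α (by omega), Nat.sub_add_cancel (by omega)]
      rw [hsplit] at hseg
      rwa [(List.append_inj' hseg.symm rfl).1]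

namespace DetPA

section

variable {Q S M : Type} {d : ℕ} (A : DetPA Q S d M)

theorem runList_append (p : Q) (u w : List S) :
    A.runList p (u ++ w) = A.runList (A.runList p u) w := by
  induction u generalizing p with
  | nil => rfl
  | cons a u ih => exact ih _

theorem sumList_append (p : Q) (u w : List S) :
    A.sumList p (u ++ w) = A.sumList p u + A.sumList (A.runList p u) w := by
  induction u generalizing p with
  | nil => simp [sumList, runList]
  | cons a u ih => simp [sumList, runList, ih, add_assoc]

theorem runList_replicate_succ {p q : Q} {x : S} {v : Fin d → ℕ} (hp : A.trans p x = (v, q))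
    (hq : A.trans q x = (v, q)) (n : ℕ) :
    A.runList p (List.replicate (n + 1) x) = q ∧
      A.sumList p (List.replicate (n + 1) x) = (n + 1) • v := by
  induction n generalizing p with
  | zero => simp [runList, sumList, hp]
  | succ n ih =>
    obtain ⟨hrun, hsum⟩ := ih hq
    rw [List.replicate_succ]
    refine ⟨by simpa [runList, hp] using hrun, ?_⟩
    simp only [sumList, hp, hsum]
    rw [succ_nsmul' v (n + 1)]

theorem stateAt_eq_runList (α : ℕ → S) {m n : ℕ} (h : m ≤ n) :
    A.stateAt α n = A.runList (A.stateAt α m) (infixSeg α m n) := by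
  induction n, h using Nat.le_induction with
  | base => rw [infixSeg_self]; rfl
  | succ n hmn ih =>
    rw [infixSeg_succ_right α hmn, runList_append, ← ih]
    rfl

theorem vecSum_eq_sumList (α : ℕ → S) {m n : ℕ} (h : m ≤ n) :
    A.vecSum α m n = A.sumList (A.stateAt α m) (infixSeg α m n) := by
  induction n, h using Nat.le_induction with
  | base => simp [vecSum, infixSeg_self, sumList]
  | succ n hmn ih =>
    rw [infixSeg_succ_right α hmn, sumList_append, ← ih, ← stateAt_eq_runList A α hmn, vecSum,
      Finset.sum_Ico_succ_top hmn]
    simp [vecSum, sumList, step]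

end

variable {Q S : Type} {d : ℕ} (A : DetPA Q S d ℕ)

def AcceptsFrom (p : Q) (w : List S) : Prop :=
  A.acc (A.runList p w) ∧ A.sumList p w ∈ A.C

theorem weakResetAccept_iff_acceptsFrom (α : ℕ → S) :
    A.WeakResetAccept α ↔ ∃ k : ℕ → ℕ, k 0 = 0 ∧ StrictMono k ∧
      ∀ i, A.AcceptsFrom (A.stateAt α (k i)) (infixSeg α (k i) (k (i + 1))) := by
  refine exists_congr fun k => and_congr_right fun _ => and_congr_right fun hk => ?_
  rw [← forall_and]
  refine forall_congr' fun i => ?_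
  rw [AcceptsFrom, ← stateAt_eq_runList A α (hk (Nat.lt_add_one i)).le,
    ← vecSum_eq_sumList A α (hk (Nat.lt_add_one i)).le]

end DetPA

/-! ### From reachability-regular to weak reset acceptance -/

theorem exists_strictMono_of_frequently {P : ℕ → Prop} {i₀ : ℕ} (hi₀ : 0 < i₀) (hP₀ : P i₀)
    (hP : ∃ᶠ i in atTop, P i) :
    ∃ k : ℕ → ℕ, k 0 = 0 ∧ k 1 = i₀ ∧ StrictMono k ∧ ∀ i, P (k (i + 1)) := by
  obtain ⟨φ, hφ, hφP⟩ :=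
    extraction_of_frequently_atTop (hP.and_eventually (eventually_gt_atTop i₀))
  refine ⟨fun | 0 => 0 | 1 => i₀ | j + 2 => φ j, rfl, rfl, strictMono_nat_of_lt_succ ?_, ?_⟩
  · rintro (_ | _ | j)
    exacts [hi₀, (hφP 0).2, hφ (Nat.lt_add_one j)]
  · rintro (_ | j)
    exacts [hP₀, (hφP j).1]

namespace DetPA

variable {Q S : Type} {d : ℕ} (A : DetPA Q S d ℕ) (α : ℕ → S)

def toWeakReset : DetPA (Option Q) S (d + 1) ℕ where
  init := none
  trans p a := (Fin.snoc (A.trans (p.getD A.init) a).1 (if p.isNone then 1 else 0),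
    some (A.trans (p.getD A.init) a).2)
  acc p := p.elim False A.acc
  C := (fun v => Fin.snoc v 1) '' A.C ∪ range fun v => Fin.snoc v 0

theorem stateAt_toWeakReset {i : ℕ} (hi : i ≠ 0) :
    A.toWeakReset.stateAt α i = some (A.stateAt α i) := by
  obtain ⟨i, rfl⟩ := Nat.exists_eq_succ_of_ne_zero hi
  induction i with
  | zero => rfl
  | succ i ih =>
    change (A.toWeakReset.trans (A.toWeakReset.stateAt α (i + 1)) (α (i + 1))).2 = _
    rw [ih i.succ_ne_zero]
    rfl

@[simp]
theorem toWeakReset_acc_some (q : Q) : A.toWeakReset.acc (some q) ↔ A.acc q := Iff.rfl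

theorem step_toWeakReset (i : ℕ) :
    A.toWeakReset.step α i = Fin.snoc (A.step α i) (if i = 0 then 1 else 0) := by
  cases i with
  | zero => rfl
  | succ i =>
    change (A.toWeakReset.trans (A.toWeakReset.stateAt α (i + 1)) (α (i + 1))).1 = _
    rw [stateAt_toWeakReset A α i.succ_ne_zero]
    rfl

theorem vecSum_toWeakReset {m n : ℕ} (h : m < n) :
    A.toWeakReset.vecSum α m n = Fin.snoc (A.vecSum α m n) (if m = 0 then 1 else 0) := by
  ext j
  refine Fin.lastCases ?_ (fun j => ?_) j
  · simp only [vecSum, Finset.sum_apply, step_toWeakReset, Fin.snoc_last, Finset.sum_ite_eq',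
      Finset.mem_Ico]
    by_cases hm : m = 0 <;> simp [hm]
    omega
  · simp [vecSum, Finset.sum_apply, step_toWeakReset]

theorem snoc_mem_toWeakReset_C {v : Fin d → ℕ} {c : ℕ} :
    Fin.snoc v c ∈ A.toWeakReset.C ↔ c = 1 ∧ v ∈ A.C ∨ c = 0 := by
  simp only [toWeakReset, mem_union, mem_image, mem_range, Fin.snoc_inj]
  constructor
  · rintro (⟨u, hu, rfl, rfl⟩ | ⟨u, rfl, rfl⟩)
    exacts [Or.inl ⟨rfl, hu⟩, Or.inr rfl]
  · rintro (⟨rfl, hv⟩ | rfl)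
    exacts [Or.inl ⟨v, hv, rfl, rfl⟩, Or.inr ⟨v, rfl, rfl⟩]

theorem semiLin_toWeakReset_C (hC : SemiLin A.C) : SemiLin A.toWeakReset.C := by
  let g : (Fin d → ℕ) →+ (Fin (d + 1) → ℕ) :=
    { toFun := fun v => Fin.snoc v 0
      map_zero' := by ext j; refine Fin.lastCases ?_ (fun j => ?_) j <;> simp
      map_add' := fun u v => by
        ext j; refine Fin.lastCases ?_ (fun j => ?_) j <;> simp [Pi.add_apply] }
  have hmark : (fun v : Fin d → ℕ => (Fin.snoc v 1 : Fin (d + 1) → ℕ)) '' A.C =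
      (Pi.single (Fin.last d) 1 : Fin (d + 1) → ℕ) +ᵥ g '' A.C := by
    rw [← image_vadd, image_image]
    refine image_congr fun v _ => ?_
    ext j
    refine Fin.lastCases ?_ (fun j => ?_) j <;> simp [g, Fin.castSucc_ne_last]
  rw [semiLin_iff_isSemilinearSet] at hC ⊢
  rw [toWeakReset, hmark, ← image_univ]
  exact ((hC.image g).vadd _).union (IsSemilinearSet.univ.image g)

theorem weakResetAccept_toWeakReset_iff :
    A.toWeakReset.WeakResetAccept α ↔ A.ReachRegAccept α := by
  constructor
  · rintro ⟨k, hk0, hk, hacc, hC⟩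
    have hpos : ∀ i, k (i + 1) ≠ 0 := fun i => by have := hk (show 0 < i + 1 by omega); omega
    refine ⟨⟨k 1, Nat.one_le_iff_ne_zero.2 (hpos 0), ?_, ?_⟩, fun n => ⟨k (n + 1), ?_, ?_⟩⟩
    · simpa [stateAt_toWeakReset A α (hpos 0)] using hacc 0
    · have := hC 0
      rw [hk0, vecSum_toWeakReset A α (Nat.pos_of_ne_zero (hpos 0)), if_pos rfl,
        snoc_mem_toWeakReset_C] at this
      simpa using this
    · exact (Nat.le_succ n).trans (hk.id_le _)
    · simpa [stateAt_toWeakReset A α (hpos n)] using hacc n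
  · rintro ⟨⟨i₀, hi₀, hacc, hC⟩, hinf⟩
    obtain ⟨k, hk0, hk1, hk, hP⟩ :=
      exists_strictMono_of_frequently hi₀ hacc (frequently_atTop.2 hinf)
    have hpos : ∀ i, k (i + 1) ≠ 0 := fun i => by have := hk (show 0 < i + 1 by omega); omega
    refine ⟨k, hk0, hk, fun i => ?_, fun i => ?_⟩
    · simpa [stateAt_toWeakReset A α (hpos i)] using hP i
    · rw [vecSum_toWeakReset A α (hk (Nat.lt_add_one i)), snoc_mem_toWeakReset_C]
      cases i with
      | zero => simp [hk0, hk1, hC]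
      | succ i => simp [hpos i]

end DetPA

theorem DetReachRegRecog.detWeakResetRecog {S : Type} {L : Set (ℕ → S)}
    (h : DetReachRegRecog L) : DetWeakResetRecog L := by
  obtain ⟨d, Q, hQ, A, hC, rfl⟩ := h
  exact ⟨d + 1, Option Q, inferInstance, A.toWeakReset, A.semiLin_toWeakReset_C hC,
    by ext α; exact (A.weakResetAccept_toWeakReset_iff α).symm⟩

/-! ### A deterministic weak reset automaton for `{aⁿbⁿ | n > 0}^ω` -/

theorem head?_of_mem_Wanbn {w : List Bool} (hw : w ∈ Wanbn) : w.head? = some true := by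
  obtain ⟨_ | n, hn, rfl⟩ := hw
  · omega
  · simp [List.replicate_succ]

theorem cons_true_mem_image_Wanbn_iff {w : List Bool} :
    true :: w ∈ (· ++ [true]) '' Wanbn ↔
      ∃ r, w = List.replicate r true ++ List.replicate (r + 1) false ++ [true] := by
  simp only [Wanbn, mem_image, mem_ofPred_eq]
  constructor
  · rintro ⟨_, ⟨n, hn, rfl⟩, h⟩
    obtain ⟨r, rfl⟩ := Nat.exists_eq_add_of_lt hn
    exact ⟨r, by simpa [List.replicate_succ] using h.symm⟩
  · rintro ⟨r, rfl⟩
    exact ⟨_, ⟨r + 1, r.succ_pos, rfl⟩, by simp [List.replicate_succ]⟩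

inductive AnBnState
  | start | blockStart | inA | inB | dead
  deriving DecidableEq

instance : Fintype AnBnState :=
  ⟨{.start, .blockStart, .inA, .inB, .dead}, fun x => by cases x <;> simp⟩

open AnBnState

/-- The counters are the numbers of `a`s, of `b`s and of factors `ba`. The first `a` of the word
is not counted, so the first reset segment `aⁿbⁿa` and every later one `aⁿ⁻¹bⁿa` both produce
`(n, n, 1)`. -/
def anbnPA : DetPA AnBnState Bool 3 ℕ where
  init := start
  trans
    | start, true => (0, blockStart)
    | blockStart, true | inA, true => (![1, 0, 0], inA)
    | inB, true => (![1, 0, 1], blockStart)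
    | start, false | dead, _ => (0, dead)
    | _, false => (![0, 1, 0], inB)
  acc p := p = blockStart
  C := LinSet ![1, 1, 1] {![1, 1, 0]}

namespace anbnPA

theorem mem_C_iff {v : Fin 3 → ℕ} : v ∈ anbnPA.C ↔ ∃ n, v = ![n + 1, n + 1, 1] := by
  simp only [anbnPA, LinSet, Finset.sum_singleton, mem_ofPred_eq]
  constructor
  · rintro ⟨z, rfl⟩
    exact ⟨z ![1, 1, 0], by simp [add_comm]⟩
  · rintro ⟨n, rfl⟩
    exact ⟨fun _ => n, by simp [add_comm]⟩

theorem runList_dead (w : List Bool) : anbnPA.runList dead w = dead := by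
  induction w with
  | nil => rfl
  | cons x w ih => cases x <;> exact ih

theorem runList_ne_start {p : AnBnState} (hp : p ≠ start) (w : List Bool) :
    anbnPA.runList p w ≠ start := by
  induction w generalizing p with
  | nil => exact hp
  | cons x w ih => exact ih (by cases p <;> cases x <;> simp [anbnPA])

theorem trans_eq_blockStart {p : AnBnState} {x : Bool} :
    (anbnPA.trans p x).2 = blockStart ↔ (p = start ∨ p = inB) ∧ x = true := by
  cases p <;> cases x <;> simp [anbnPA]

theorem eq_nil_of_runList_blockStart {w : List Bool}
    (hq : anbnPA.runList blockStart w = blockStart) (hv : anbnPA.sumList blockStart w 2 = 0) :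
    w = [] := by
  rcases w.eq_nil_or_concat with rfl | ⟨w, x, rfl⟩
  · rfl
  rw [List.concat_eq_append, DetPA.runList_append] at hq
  obtain ⟨hp | hp, rfl⟩ := trans_eq_blockStart.1 hq
  · exact absurd hp (runList_ne_start (by decide) w)
  · rw [List.concat_eq_append, DetPA.sumList_append, hp] at hv
    simp [DetPA.sumList, anbnPA] at hv

theorem runList_blockStart_replicate_true (r : ℕ) :
    (anbnPA.runList blockStart (List.replicate r true) = blockStart ∨
      anbnPA.runList blockStart (List.replicate r true) = inA) ∧
    anbnPA.sumList blockStart (List.replicate r true) = ![r, 0, 0] := by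
  cases r with
  | zero => exact ⟨Or.inl rfl, by ext i; fin_cases i <;> rfl⟩
  | succ r =>
    obtain ⟨hrun, hsum⟩ :=
      anbnPA.runList_replicate_succ (p := blockStart) (q := inA) (x := true) (v := ![1, 0, 0])
        rfl rfl r
    exact ⟨Or.inr hrun, by simp [hsum]⟩

theorem runList_replicate_false {p : AnBnState} (hp : p = blockStart ∨ p = inA) (s : ℕ) :
    anbnPA.runList p (List.replicate (s + 1) false) = inB ∧
    anbnPA.sumList p (List.replicate (s + 1) false) = ![0, s + 1, 0] := by
  obtain ⟨hrun, hsum⟩ :=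
    anbnPA.runList_replicate_succ (p := p) (q := inB) (x := false) (v := ![0, 1, 0])
      (by rcases hp with rfl | rfl <;> rfl) rfl s
  exact ⟨hrun, by simp [hsum]⟩

theorem runList_blockStart_block (r s : ℕ) :
    anbnPA.runList blockStart
        (List.replicate r true ++ List.replicate (s + 1) false ++ [true]) = blockStart ∧
      anbnPA.sumList blockStart
        (List.replicate r true ++ List.replicate (s + 1) false ++ [true]) = ![r + 1, s + 1, 1] := by
  obtain ⟨hqa, hva⟩ := runList_blockStart_replicate_true r
  obtain ⟨hqb, hvb⟩ := runList_replicate_false hqa s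
  simp only [DetPA.runList_append, DetPA.sumList_append, hqb, hva, hvb]
  refine ⟨rfl, ?_⟩
  simp [DetPA.sumList, anbnPA, add_comm]

theorem acceptsFrom_blockStart_iff {w : List Bool} :
    anbnPA.AcceptsFrom blockStart w ↔
      ∃ r, w = List.replicate r true ++ List.replicate (r + 1) false ++ [true] := by
  constructor
  · rintro ⟨hq, hv⟩
    obtain ⟨n, hn⟩ := mem_C_iff.1 hv
    obtain ⟨r, w₁, rfl, h₁⟩ := List.exists_eq_replicate_append true w
    obtain ⟨hqa, hva⟩ := runList_blockStart_replicate_true r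
    rcases w₁ with _ | ⟨_ | _, w₂⟩
    · simp [hva] at hn
    · obtain ⟨s, w₃, rfl, h₃⟩ := List.exists_eq_replicate_append false w₂
      rcases w₃ with _ | ⟨_ | _, v⟩
      · have hw : List.replicate r true ++ false :: (List.replicate s false ++ []) =
            List.replicate r true ++ List.replicate (s + 1) false := by
          simp [List.replicate_succ]
        rw [hw, DetPA.runList_append, (runList_replicate_false hqa s).1] at hq
        simp [anbnPA] at hq
      · simp at h₃
      · -- `w = aʳbˢ⁺¹av`, and the `ba`-counter forces `v = []`
        have hw : List.replicate r true ++ false :: (List.replicate s false ++ true :: v) =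
            (List.replicate r true ++ List.replicate (s + 1) false ++ [true]) ++ v := by
          simp [List.replicate_succ]
        rw [hw, DetPA.runList_append, (runList_blockStart_block r s).1] at hq
        rw [hw, DetPA.sumList_append, (runList_blockStart_block r s).2,
          (runList_blockStart_block r s).1] at hn
        obtain rfl : v = [] := eq_nil_of_runList_blockStart hq (by simpa using congrFun hn 2)
        simp [DetPA.sumList] at hn
        exact ⟨r, by rw [show s = r by omega]; simp [List.replicate_succ]⟩
    · simp at h₁
  · rintro ⟨r, rfl⟩
    exact ⟨(runList_blockStart_block r r).1, mem_C_iff.2 ⟨r, (runList_blockStart_block r r).2⟩⟩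

theorem acceptsFrom_start_iff {w : List Bool} :
    anbnPA.AcceptsFrom start w ↔ w ∈ (· ++ [true]) '' Wanbn := by
  rcases w with _ | ⟨_ | _, w⟩
  · simp [DetPA.AcceptsFrom, DetPA.runList, anbnPA, Wanbn]
  · refine iff_of_false (fun h => ?_) ?_
    · have hq := h.1
      rw [show anbnPA.runList start (false :: w) = dead from runList_dead w] at hq
      cases hq
    · rintro ⟨u, hu, h⟩
      have := congrArg List.head? h
      simp [List.head?_append, head?_of_mem_Wanbn hu] at this
  · rw [cons_true_mem_image_Wanbn_iff, ← acceptsFrom_blockStart_iff]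
    simp [DetPA.AcceptsFrom, DetPA.runList, DetPA.sumList, anbnPA]

theorem pos_and_eq_true_of_stateAt_eq_blockStart {α : ℕ → Bool} {m : ℕ}
    (h : anbnPA.stateAt α m = blockStart) : 0 < m ∧ α (m - 1) = true := by
  cases m with
  | zero => cases h
  | succ m => exact ⟨m.succ_pos, (trans_eq_blockStart.1 h).2⟩

theorem acceptsFrom_blockStart_infixSeg_iff {α : ℕ → Bool} {m n : ℕ} (hmn : m < n)
    (hm : anbnPA.stateAt α m = blockStart) :
    anbnPA.AcceptsFrom blockStart (infixSeg α m n) ↔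
      infixSeg α (m - 1) n ∈ (· ++ [true]) '' Wanbn := by
  obtain ⟨hm0, hα⟩ := pos_and_eq_true_of_stateAt_eq_blockStart hm
  rw [infixSeg_eq_cons α (by omega : m - 1 < n), hα, Nat.sub_add_cancel hm0,
    cons_true_mem_image_Wanbn_iff, acceptsFrom_blockStart_iff]

theorem weakResetAccept_iff (α : ℕ → Bool) :
    anbnPA.WeakResetAccept α ↔ ∃ k : ℕ → ℕ, k 0 = 0 ∧ StrictMono k ∧
      ∀ i, infixSeg α (k i - 1) (k (i + 1)) ∈ (· ++ [true]) '' Wanbn := by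
  rw [DetPA.weakResetAccept_iff_acceptsFrom]
  refine exists_congr fun k => and_congr_right fun hk0 => and_congr_right fun hk => ?_
  have hnext : ∀ i, anbnPA.AcceptsFrom (anbnPA.stateAt α (k i)) (infixSeg α (k i) (k (i + 1))) →
      anbnPA.stateAt α (k (i + 1)) = blockStart := fun i h =>
    (anbnPA.stateAt_eq_runList α (hk (Nat.lt_add_one i)).le).trans h.1
  have hfirst : anbnPA.AcceptsFrom (anbnPA.stateAt α (k 0)) (infixSeg α (k 0) (k 1)) ↔
      infixSeg α (k 0 - 1) (k 1) ∈ (· ++ [true]) '' Wanbn := by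
    rw [hk0]
    exact acceptsFrom_start_iff
  constructor
  · rintro h (_ | i)
    · exact hfirst.1 (h 0)
    · have hq := hnext i (h i)
      have hacc := h (i + 1)
      rw [hq] at hacc
      exact (acceptsFrom_blockStart_infixSeg_iff (hk (Nat.lt_add_one (i + 1))) hq).1 hacc
  · intro h i
    induction i with
    | zero => exact hfirst.2 (h 0)
    | succ i ih =>
      have hq := hnext i ih
      rw [hq]
      exact (acceptsFrom_blockStart_infixSeg_iff (hk (Nat.lt_add_one (i + 1))) hq).2 (h (i + 1))

end anbnPA

theorem detWeakResetRecog_omegaPow_Wanbn : DetWeakResetRecog (omegaPow Wanbn) := by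
  refine ⟨3, AnBnState, inferInstance, anbnPA, ⟨1, fun _ => _, fun _ => _, (iUnion_const _).symm⟩,
    ?_⟩
  ext α
  rw [mem_ofPred_eq, anbnPA.weakResetAccept_iff,
    mem_omegaPow_iff_of_head fun _ => head?_of_mem_Wanbn]

/-! ### Pumping runs of reachability-regular automata -/

theorem infixSeg_eq_replicate_append_replicate_iff {α : ℕ → Bool} {m k n : ℕ} :
    infixSeg α m k = List.replicate n true ++ List.replicate n false ↔
      k - m = 2 * n ∧ ∀ t < 2 * n, α (m + t) = decide (t < n) := by
  rw [List.ext_getElem_iff]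
  simp only [infixSeg, List.length_ofFn, List.length_append, List.length_replicate,
    List.getElem_ofFn, List.getElem_append, List.getElem_replicate]
  constructor
  · rintro ⟨hlen, h⟩
    refine ⟨by omega, fun t ht => ?_⟩
    have := h t (by omega) (by omega)
    split_ifs at this with htn <;> simp [this, htn]
  · rintro ⟨hlen, h⟩
    refine ⟨by omega, fun t h₁ h₂ => ?_⟩
    rw [h t (by omega)]
    split_ifs with htn <;> simp [htn]

theorem exists_le_lt_of_strictMono {k : ℕ → ℕ} (hk : StrictMono k) (hk0 : k 0 = 0) (p : ℕ) :
    ∃ i, k i ≤ p ∧ p < k (i + 1) := by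
  classical
  have hex : ∃ i, p < k (i + 1) := ⟨p, (Nat.lt_add_one p).trans_le (hk.id_le _)⟩
  refine ⟨Nat.find hex, ?_, Nat.find_spec hex⟩
  rcases h : Nat.find hex with _ | i
  · simp [hk0]
  · exact not_lt.1 (Nat.find_min hex (by omega))

theorem exists_block_of_mem_omegaPow_Wanbn {α : ℕ → Bool} (hα : α ∈ omegaPow Wanbn) {p : ℕ}
    (hp : α p = true) (hp' : p = 0 ∨ α (p - 1) = false) :
    ∃ n, 0 < n ∧ ∀ t < 2 * n, α (p + t) = decide (t < n) := by
  obtain ⟨k, hk0, hk, hW⟩ := hα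
  choose n hn hblock using hW
  obtain ⟨i, hki, hpk⟩ := exists_le_lt_of_strictMono hk hk0 p
  obtain ⟨hlen, hlet⟩ := infixSeg_eq_replicate_append_replicate_iff.1 (hblock i)
  obtain rfl : k i = p := by
    by_contra hne
    have h₁ := hlet (p - k i) (by omega)
    have h₂ := hlet (p - 1 - k i) (by omega)
    rw [Nat.add_sub_cancel' hki, hp] at h₁
    rw [show k i + (p - 1 - k i) = p - 1 by omega] at h₂
    rcases hp' with rfl | hp'
    · omega
    · rw [hp'] at h₂
      simp at h₁ h₂
      omega
  exact ⟨n i, hn i, hlet⟩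

def pumpSeq {X : Type} (f : ℕ → X) (p q : ℕ) : ℕ → X :=
  fun j => if j < q then f j else f (j - (q - p))

section PumpSeq

variable {X : Type} (f : ℕ → X) {p q : ℕ}

theorem pumpSeq_of_lt {j : ℕ} (h : j < q) : pumpSeq f p q j = f j :=
  if_pos h

theorem pumpSeq_of_le {j : ℕ} (h : q ≤ j) : pumpSeq f p q j = f (j - (q - p)) :=
  if_neg (not_lt.2 h)

theorem pumpSeq_add_sub {j : ℕ} (hpq : p ≤ q) (hj : p ≤ j) :
    pumpSeq f p q (j + (q - p)) = f j := by
  rw [pumpSeq_of_le f (by omega), Nat.add_sub_cancel]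

end PumpSeq

namespace NPA

variable {Q S : Type} {d : ℕ} (A : NPA Q S d)

theorem IsRun.pumpSeq {α : ℕ → S} {r : ℕ → Q} {v : ℕ → Fin d → ℕ} (h : A.IsRun α r v) {p q : ℕ}
    (hpq : p < q) (hr : r p = r q) :
    A.IsRun (pumpSeq α p q) (pumpSeq r p q) (pumpSeq v p q) := by
  refine ⟨by rw [pumpSeq_of_lt r (by omega : 0 < q)]; exact h.1, fun j => ?_⟩
  rcases lt_or_ge j q with hj | hj
  · rw [pumpSeq_of_lt α hj, pumpSeq_of_lt r hj, pumpSeq_of_lt v hj]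
    rcases lt_or_ge (j + 1) q with hj' | hj'
    · rw [pumpSeq_of_lt r hj']
      exact h.2 j
    · rw [pumpSeq_of_le r hj', show j + 1 - (q - p) = p by omega, hr, show q = j + 1 by omega]
      exact h.2 j
  · rw [pumpSeq_of_le α hj, pumpSeq_of_le r hj, pumpSeq_of_le v hj, pumpSeq_of_le r (by omega),
      show j + 1 - (q - p) = j - (q - p) + 1 by omega]
    exact h.2 _

theorem reachRegAccept_pumpSeq {α : ℕ → S} {r : ℕ → Q} {v : ℕ → Fin d → ℕ}
    (hrun : A.IsRun α r v) {i₀ : ℕ} (hreach : 1 ≤ i₀ ∧ A.acc (r i₀) ∧ partSum v 0 i₀ ∈ A.C)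
    (hinf : ∀ n, ∃ i, n ≤ i ∧ A.acc (r i)) {p q : ℕ} (hpq : p < q) (hi₀ : i₀ < q)
    (hr : r p = r q) : A.ReachRegAccept (pumpSeq α p q) := by
  refine ⟨_, _, hrun.pumpSeq A hpq hr, ⟨i₀, hreach.1, ?_, ?_⟩, fun n => ?_⟩
  · rw [pumpSeq_of_lt r hi₀]
    exact hreach.2.1
  · convert hreach.2.2 using 1
    refine Finset.sum_congr rfl fun i hi => pumpSeq_of_lt v ?_
    rw [Finset.mem_Ico] at hi
    omega
  · obtain ⟨i, hi, hacc⟩ := hinf (n + q)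
    refine ⟨i + (q - p), by omega, ?_⟩
    rwa [pumpSeq_add_sub r hpq.le (by omega)]

end NPA

theorem exists_lt_map_eq_of_finite {Q : Type} [Finite Q] (r : ℕ → Q) (s : ℕ) :
    ∃ p q, s ≤ p ∧ p < q ∧ q ≤ s + Nat.card Q ∧ r p = r q := by
  have := Fintype.ofFinite Q
  obtain ⟨x, y, hxy, he⟩ := Fintype.exists_ne_map_eq_of_card_lt
    (fun i : Fin (Nat.card Q + 1) => r (s + i)) (by simp [Nat.card_eq_fintype_card])
  have hx := x.isLt
  have hy := y.isLt
  rcases lt_or_gt_of_ne (Fin.val_ne_of_ne hxy) with h | h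
  · exact ⟨s + x, s + y, by omega, by omega, by omega, he⟩
  · exact ⟨s + y, s + x, by omega, by omega, by omega, he.symm⟩

def blockPattern (m : ℕ) : ℕ → Bool :=
  fun j => decide (j % (2 * m) < m)

theorem blockPattern_apply {m c u : ℕ} (hu : u < 2 * m) :
    blockPattern m (2 * m * c + u) = decide (u < m) := by
  rw [blockPattern, Nat.mul_add_mod, Nat.mod_eq_of_lt hu]

theorem blockPattern_mem_omegaPow {m : ℕ} (hm : 0 < m) : blockPattern m ∈ omegaPow Wanbn := by
  refine ⟨fun i => 2 * m * i, by simp, fun i j hij => (Nat.mul_lt_mul_left (by omega)).2 hij,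
    fun i => ⟨m, hm, ?_⟩⟩
  rw [infixSeg_eq_replicate_append_replicate_iff]
  refine ⟨by simp only [mul_add, mul_one]; omega, fun t ht => blockPattern_apply ht⟩

theorem pumpSeq_blockPattern_apply {m c p q t : ℕ} (hp : 2 * m * c ≤ p) (hpq : p < q)
    (hq : q ≤ 2 * m * c + m) (ht : t < 2 * m + (q - p)) :
    pumpSeq (blockPattern m) p q (2 * m * c + t) = decide (t < m + (q - p)) := by
  rcases lt_or_ge (2 * m * c + t) q with h | h
  · rw [pumpSeq_of_lt _ h, blockPattern_apply (by omega)]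
    simp only [decide_eq_decide]
    omega
  · rw [pumpSeq_of_le _ h, show 2 * m * c + t - (q - p) = 2 * m * c + (t - (q - p)) by omega,
      blockPattern_apply (by omega)]
    simp only [decide_eq_decide]
    omega

theorem pumpSeq_blockPattern_not_mem_omegaPow {m c p q : ℕ} (hc : 0 < c) (hp : 2 * m * c ≤ p)
    (hpq : p < q) (hq : q < 2 * m * c + m) : pumpSeq (blockPattern m) p q ∉ omegaPow Wanbn := by
  intro hβ
  obtain ⟨s, hs⟩ : ∃ s, s = 2 * m * c := ⟨_, rfl⟩
  obtain ⟨c, rfl⟩ : ∃ c', c = c' + 1 := ⟨c - 1, by omega⟩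
  have hs' : s = 2 * m * c + 2 * m := by rw [hs, mul_add, mul_one]
  have hwindow : ∀ t < 2 * m + (q - p),
      pumpSeq (blockPattern m) p q (s + t) = decide (t < m + (q - p)) := fun t ht => by
    rw [hs]
    exact pumpSeq_blockPattern_apply hp hpq hq.le ht
  have hafter : pumpSeq (blockPattern m) p q (s + (2 * m + (q - p))) = true := by
    rw [pumpSeq_of_le _ (by omega), show s + (2 * m + (q - p)) - (q - p) = 2 * m * (c + 2) + 0 by
      rw [hs]; ring_nf; omega, blockPattern_apply (by omega), decide_eq_true_eq]
    omega
  have hbefore : pumpSeq (blockPattern m) p q (s - 1) = false := by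
    rw [pumpSeq_of_lt _ (by omega), show s - 1 = 2 * m * c + (2 * m - 1) by omega,
      blockPattern_apply (by omega), decide_eq_false_iff_not]
    omega
  obtain ⟨n, hn, hblock⟩ := exists_block_of_mem_omegaPow_Wanbn hβ (p := s)
    (by rw [← add_zero s, hwindow 0 (by omega), decide_eq_true_eq]; omega) (Or.inr hbefore)
  -- The factor `aⁿbⁿ` starting at `s` would have to match `aᵐ⁺ᵟbᵐa`, where `δ = q - p > 0`.
  rcases lt_trichotomy n (m + (q - p)) with h | rfl | h
  · have := hblock n (by omega)
    rw [hwindow n (by omega)] at this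
    simp at this
    omega
  · have := hblock (2 * m + (q - p)) (by omega)
    rw [hafter] at this
    simp at this
    omega
  · have := hblock (m + (q - p)) (by omega)
    rw [hwindow _ (by omega)] at this
    simp at this
    omega

theorem not_npaReachRegRecog_omegaPow_Wanbn : ¬ NPAReachRegRecog (omegaPow Wanbn) := by
  rintro ⟨d, Q, hQ, A, -, hL⟩
  obtain ⟨r, v, hrun, ⟨i₀, hreach⟩, hinf⟩ : A.ReachRegAccept (blockPattern (Nat.card Q + 1)) := by
    simpa [hL] using blockPattern_mem_omegaPow (Nat.succ_pos (Nat.card Q))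
  obtain ⟨p, q, hsp, hpq, hqs, hr⟩ := exists_lt_map_eq_of_finite r (2 * (Nat.card Q + 1) * i₀)
  refine pumpSeq_blockPattern_not_mem_omegaPow hreach.1 hsp hpq (by omega) ?_
  rw [hL]
  exact A.reachRegAccept_pumpSeq hrun hreach hinf hpq (by nlinarith) hr

/-- deterministic reachability-regular PA ⊆ deterministic weak reset PA;
strictness: `{aⁿbⁿ | n > 0}^ω` is det. weak reset recognizable but not (even
nondeterministic) reachability-regular PA recognizable. -/
theorem detReachReg_subset_detWeakReset_strict :
    (∀ (S : Type) (L : Set (ℕ → S)), DetReachRegRecog L → DetWeakResetRecog L) ∧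
    DetWeakResetRecog (omegaPow Wanbn) ∧ ¬ NPAReachRegRecog (omegaPow Wanbn) :=
  ⟨fun _ _ => DetReachRegRecog.detWeakResetRecog, detWeakResetRecog_omegaPow_Wanbn,
    not_npaReachRegRecog_omegaPow_Wanbn⟩
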